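/- Let C ⊂ [0,1] be the middle-thirds Cantor set, M the set of midpoints of the connected components of [0,1] ∖ C, and C̃ = C ∪ M ⊆ ℝ with the subspace topology. Then the Cantor compactification Υ^C(C) of countably many copies of the Cantor set — that is, the quotient of the product C × C̃ obtained by collapsing C × {x} to a single point for each x ∈ C ⊂ C̃ — is homeomorphic to the Cantor set C (equivalently, to the Cantor space ℕ → Bool). -/

import Mathlib

/-- The set of midpoints of the connected components of `[0,1] \ C`, where `C` is the
middle-thirds Cantor set. -/
noncomputable def midSet : Set ℝ :=
  {m | ∃ x ∈ Set.Icc (0 : ℝ) 1 \ cantorSet,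
    m = (sInf (connectedComponentIn (Set.Icc (0 : ℝ) 1 \ cantorSet) x) +
         sSup (connectedComponentIn (Set.Icc (0 : ℝ) 1 \ cantorSet) x)) / 2}

/-- `C̃ = C ∪ M ⊆ ℝ`, the metrisable compactification of the countable discrete set `M`
with boundary the middle-thirds Cantor set `C`. -/
noncomputable def cTilde : Set ℝ := cantorSet ∪ midSet

open Set

noncomputable section

/-- digit value -/
def c2 (d : Bool) : ℝ := cond d 2 0

lemma c2_nonneg (d : Bool) : 0 ≤ c2 d := by cases d <;> simp [c2]
lemma c2_le (d : Bool) : c2 d ≤ 2 := by cases d <;> simp [c2]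

/-- value of binary sequence as Cantor point -/
noncomputable def cf (b : ℕ → Bool) : ℝ := ∑' n, c2 (b n) / 3 ^ (n + 1)

lemma geom_summable : Summable (fun n : ℕ => 2 / (3:ℝ) ^ (n + 1)) := by
  have h := (summable_geometric_of_lt_one (by norm_num) (by norm_num : (1:ℝ)/3 < 1)).mul_left 2
  have heq : (fun n : ℕ => 2 / (3:ℝ) ^ (n+1)) = (fun n : ℕ => 2 * ((1:ℝ)/3)^n) ∘ (fun n => n + 1) := by
    funext n
    simp only [Function.comp, div_pow, one_pow, pow_succ]
    ring
  rw [heq]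
  exact h.comp_injective (add_left_injective 1)

lemma cf_summable (b : ℕ → Bool) : Summable (fun n => c2 (b n) / 3 ^ (n + 1) : ℕ → ℝ) := by
  apply Summable.of_nonneg_of_le (fun n => by {have := c2_nonneg (b n); positivity})
    (fun n => ?_) geom_summable
  gcongr
  exact c2_le _

lemma cf_nonneg (b : ℕ → Bool) : 0 ≤ cf b :=
  tsum_nonneg (fun n => by have := c2_nonneg (b n); positivity)

lemma cf_le_one (b : ℕ → Bool) : cf b ≤ 1 := by
  have h2 : Summable (fun n : ℕ => 2 / 3 ^ (n + 1) : ℕ → ℝ) := geom_summable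
  calc cf b ≤ ∑' n : ℕ, 2 / 3 ^ (n + 1) := by
        apply Summable.tsum_le_tsum (fun n => ?_) (cf_summable b) h2
        gcongr
        exact c2_le _
    _ = 1 := by
        have : (fun n : ℕ => 2 / 3 ^ (n+1) : ℕ → ℝ) = fun n : ℕ => (2/3) * (1/3)^n := by
          funext n; rw [pow_succ, one_div_pow]; ring
        rw [this, tsum_mul_left, tsum_geometric_of_lt_one (by norm_num) (by norm_num)]
        norm_num

lemma cf_rec (b : ℕ → Bool) : cf b = (c2 (b 0) + cf (fun n => b (n + 1))) / 3 := by
  rw [cf, (cf_summable b).tsum_eq_zero_add]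
  have : ∀ n : ℕ, c2 (b (n+1)) / 3 ^ (n + 1 + 1) = (1/3) * (c2 (b (n+1)) / 3 ^ (n+1)) := by
    intro n; rw [pow_succ]; ring
  simp only [this]
  rw [tsum_mul_left]
  rw [cf]
  ring

lemma cf_false_rec (b : ℕ → Bool) (h : b 0 = false) : cf b = cf (fun n => b (n+1)) / 3 := by
  rw [cf_rec, h]; simp [c2]

lemma cf_true_rec (b : ℕ → Bool) (h : b 0 = true) : cf b = (2 + cf (fun n => b (n+1))) / 3 := by
  rw [cf_rec, h]; simp [c2]

lemma cf_mem_preCantorSet (n : ℕ) (b : ℕ → Bool) : cf b ∈ preCantorSet n := by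
  induction n generalizing b with
  | zero => exact ⟨cf_nonneg b, cf_le_one b⟩
  | succ n ih =>
    cases h : b 0 with
    | false =>
      exact Or.inl ⟨cf (fun n => b (n+1)), ih _, by rw [cf_false_rec b h]⟩
    | true =>
      exact Or.inr ⟨cf (fun n => b (n+1)), ih _, by rw [cf_true_rec b h]⟩

lemma cf_mem_cantorSet (b : ℕ → Bool) : cf b ∈ cantorSet :=
  Set.mem_iInter.mpr (fun n => cf_mem_preCantorSet n b)

lemma cf_le_third (b : ℕ → Bool) (h : b 0 = false) : cf b ≤ 1/3 := by
  rw [cf_false_rec b h]; linarith [cf_le_one (fun n => b (n+1))]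

lemma third2_le_cf (b : ℕ → Bool) (h : b 0 = true) : 2/3 ≤ cf b := by
  rw [cf_true_rec b h]; linarith [cf_nonneg (fun n => b (n+1))]

lemma cf_head_eq (b b' : ℕ → Bool) (h : cf b = cf b') : b 0 = b' 0 := by
  by_contra hne
  rcases Bool.eq_false_or_eq_true (b 0) with h0 | h0 <;>
  rcases Bool.eq_false_or_eq_true (b' 0) with h1 | h1
  · exact hne (h0.trans h1.symm)
  · have ha := third2_le_cf b h0; have hb := cf_le_third b' h1; linarith
  · have ha := cf_le_third b h0; have hb := third2_le_cf b' h1; linarith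
  · exact hne (h0.trans h1.symm)

lemma cf_tail_eq (b b' : ℕ → Bool) (h : cf b = cf b') :
    cf (fun n => b (n+1)) = cf (fun n => b' (n+1)) := by
  have h0 := cf_head_eq b b' h
  rw [cf_rec b, cf_rec b', h0] at h
  have h3 : (0:ℝ) < 3 := by norm_num
  field_simp at h
  linarith

lemma cf_coord_eq : ∀ (n : ℕ) (b b' : ℕ → Bool), cf b = cf b' → b n = b' n := by
  intro n
  induction n with
  | zero => exact fun b b' h => cf_head_eq b b' h
  | succ n ih => exact fun b b' h => ih _ _ (cf_tail_eq b b' h)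

lemma cf_injective : Function.Injective cf := by
  intro b b' h
  funext n
  exact cf_coord_eq n b b' h

/-- cantorSet basic structure -/
lemma preCantorSet_antitone_succ : ∀ n, preCantorSet (n+1) ⊆ preCantorSet n := by
  intro n
  induction n with
  | zero =>
    rintro x (⟨y, hy, rfl⟩ | ⟨y, hy, rfl⟩) <;> obtain ⟨h0, h1⟩ := hy <;>
      constructor <;> simp <;> linarith
  | succ n ih =>
    rintro x (⟨y, hy, rfl⟩ | ⟨y, hy, rfl⟩)
    · exact Or.inl ⟨y, ih hy, rfl⟩
    · exact Or.inr ⟨y, ih hy, rfl⟩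

lemma preCantorSet_subset_unit (n : ℕ) : preCantorSet n ⊆ Set.Icc (0:ℝ) 1 := by
  induction n with
  | zero => exact subset_rfl
  | succ n ih => exact (preCantorSet_antitone_succ n).trans ih

lemma cantorSet_third_cases {x : ℝ} (hx : x ∈ cantorSet) : x ≤ 1/3 ∨ 2/3 ≤ x := by
  have h1 : x ∈ preCantorSet 1 := Set.mem_iInter.mp hx 1
  rcases h1 with ⟨y, hy, rfl⟩ | ⟨y, hy, rfl⟩
  · left; obtain ⟨_, h⟩ := hy; linarith
  · right; obtain ⟨h, _⟩ := hy; linarith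

lemma cantorSet_step_left {x : ℝ} (hx : x ∈ cantorSet) (h : x ≤ 1/3) : 3 * x ∈ cantorSet := by
  rw [cantorSet, Set.mem_iInter] at hx ⊢
  intro n
  rcases hx (n+1) with ⟨y, hy, rfl⟩ | ⟨y, hy, rfl⟩
  · have : 3 * (y / 3) = y := by ring
    rwa [this]
  · exfalso
    have := (preCantorSet_subset_unit n hy).1
    have : (2:ℝ)/3 ≤ (2 + y)/3 := by linarith
    linarith

lemma cantorSet_step_right {x : ℝ} (hx : x ∈ cantorSet) (h : 2/3 ≤ x) :
    3 * x - 2 ∈ cantorSet := by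
  rw [cantorSet, Set.mem_iInter] at hx ⊢
  intro n
  rcases hx (n+1) with ⟨y, hy, rfl⟩ | ⟨y, hy, rfl⟩
  · exfalso
    have := (preCantorSet_subset_unit n hy).2
    have : y / 3 ≤ 1/3 := by linarith
    linarith
  · have : 3 * ((2 + y) / 3) - 2 = y := by ring
    rwa [this]

/-- the expanding map on the Cantor set -/
noncomputable def gstep (x : ℝ) : ℝ := if x ≤ 1/3 then 3 * x else 3 * x - 2

lemma gstep_mem {x : ℝ} (hx : x ∈ cantorSet) : gstep x ∈ cantorSet := by
  rw [gstep]
  split_ifs with h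
  · exact cantorSet_step_left hx h
  · rcases cantorSet_third_cases hx with h' | h'
    · exact absurd h' h
    · exact cantorSet_step_right hx h'

/-- digit sequence of a real number -/
noncomputable def dig (x : ℝ) (n : ℕ) : Bool := decide (1/3 < gstep^[n] x)

lemma dig_tail (x : ℝ) : (fun n => dig x (n+1)) = dig (gstep x) := by
  funext n
  rw [dig, dig, Function.iterate_succ_apply]

lemma cf_dig_dist {x : ℝ} (hx : x ∈ cantorSet) :
    ∀ n : ℕ, |cf (dig x) - x| ≤ (1/3) ^ n := by
  intro n
  induction n generalizing x with
  | zero =>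
    simp only [pow_zero]
    have h1 := cf_nonneg (dig x)
    have h2 := cf_le_one (dig x)
    have h3 := (preCantorSet_subset_unit 0 (Set.mem_iInter.mp hx 0))
    rw [abs_le]; constructor <;> [linarith [h3.2]; linarith [h3.1]]
  | succ n ih =>
    by_cases h : x ≤ 1/3
    · have hd : dig x 0 = false := by
        rw [dig, Function.iterate_zero_apply]; simp; linarith
      have hg : gstep x = 3 * x := by rw [gstep, if_pos h]
      rw [cf_false_rec _ hd, dig_tail, hg]
      have := ih (x := gstep x) (gstep_mem hx)
      rw [hg] at this
      have heq : cf (dig (3*x)) / 3 - x = (cf (dig (3*x)) - 3*x)/3 := by ring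
      rw [heq, abs_div]
      rw [pow_succ]
      rw [abs_of_pos (by norm_num : (0:ℝ) < 3)]
      calc |cf (dig (3*x)) - 3*x| / 3 ≤ (1/3)^n / 3 := by gcongr
        _ = (1/3)^n * (1/3) := by ring
    · have hd : dig x 0 = true := by
        rw [dig, Function.iterate_zero_apply]; simp; linarith
      have hg : gstep x = 3 * x - 2 := by rw [gstep, if_neg h]
      rw [cf_true_rec _ hd, dig_tail, hg]
      have := ih (x := gstep x) (gstep_mem hx)
      rw [hg] at this
      have heq : (2 + cf (dig (3*x-2))) / 3 - x = (cf (dig (3*x-2)) - (3*x-2))/3 := by ring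
      rw [heq, abs_div, abs_of_pos (by norm_num : (0:ℝ) < 3), pow_succ]
      calc |cf (dig (3*x-2)) - (3*x-2)| / 3 ≤ (1/3)^n / 3 := by gcongr
        _ = (1/3)^n * (1/3) := by ring

lemma cf_dig {x : ℝ} (hx : x ∈ cantorSet) : cf (dig x) = x := by
  by_contra h
  have habs : 0 < |cf (dig x) - x| := abs_pos.mpr (sub_ne_zero.mpr h)
  obtain ⟨n, hn⟩ := exists_pow_lt_of_lt_one habs (by norm_num : (1:ℝ)/3 < 1)
  exact absurd (cf_dig_dist hx n) (not_le.mpr hn)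

lemma dig_cf (b : ℕ → Bool) : dig (cf b) = b :=
  cf_injective (cf_dig (cf_mem_cantorSet b))

lemma cf_surj_cantor : ∀ x ∈ cantorSet, ∃ b, cf b = x := fun x hx => ⟨dig x, cf_dig hx⟩

/-- continuity of cf -/
lemma cf_dist (n : ℕ) (b b' : ℕ → Bool) (h : ∀ i < n, b i = b' i) :
    |cf b - cf b'| ≤ (1/3) ^ n := by
  induction n generalizing b b' with
  | zero =>
    simp only [pow_zero]
    have := cf_nonneg b; have := cf_le_one b; have := cf_nonneg b'; have := cf_le_one b'
    rw [abs_le]; constructor <;> linarith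
  | succ n ih =>
    have h0 : b 0 = b' 0 := h 0 (Nat.succ_pos n)
    rw [cf_rec b, cf_rec b', h0]
    have heq : (c2 (b' 0) + cf fun n => b (n+1)) / 3 - (c2 (b' 0) + cf fun n => b' (n+1)) / 3
        = ((cf fun n => b (n+1)) - cf fun n => b' (n+1)) / 3 := by ring
    rw [heq, abs_div, abs_of_pos (by norm_num : (0:ℝ) < 3), pow_succ]
    have := ih (fun n => b (n+1)) (fun n => b' (n+1)) (fun i hi => h (i+1) (by omega))
    calc |(cf fun n => b (n+1)) - cf fun n => b' (n+1)| / 3 ≤ (1/3)^n / 3 := by gcongr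
      _ = (1/3)^n * (1/3) := by ring

lemma eventually_agree (b : ℕ → Bool) (n : ℕ) :
    ∀ᶠ b' in nhds b, ∀ i < n, b' i = b i := by
  have h : ∀ i : ℕ, ∀ᶠ b' in nhds b, b' i = b i := by
    intro i
    have hc : Continuous (fun b' : ℕ → Bool => b' i) := continuous_apply i
    have : IsOpen {b' : ℕ → Bool | b' i = b i} :=
      hc.isOpen_preimage {x | x = b i} (isOpen_discrete _)
    exact this.mem_nhds rfl
  induction n with
  | zero => filter_upwards with b'; omega
  | succ n ih =>
    filter_upwards [ih, h n] with b' h1 h2 i hi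
    rcases Nat.lt_succ_iff_lt_or_eq.mp hi with hi | rfl
    · exact h1 i hi
    · exact h2

lemma cf_continuous : Continuous cf := by
  rw [continuous_iff_continuousAt]
  intro b
  rw [ContinuousAt, Metric.tendsto_nhds]
  intro ε hε
  obtain ⟨n, hn⟩ := exists_pow_lt_of_lt_one hε (by norm_num : (1:ℝ)/3 < 1)
  filter_upwards [eventually_agree b n] with b' hb'
  rw [Real.dist_eq]
  exact lt_of_le_of_lt (cf_dist n b' b hb') hn

/-- The homeomorphism between Cantor space and the Cantor set -/
noncomputable def cfEquiv : (ℕ → Bool) ≃ ↥cantorSet :=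
  Equiv.ofBijective (fun b => ⟨cf b, cf_mem_cantorSet b⟩)
    ⟨fun b b' h => cf_injective (Subtype.ext_iff.mp h),
     fun ⟨x, hx⟩ => ⟨dig x, Subtype.ext (cf_dig hx)⟩⟩

noncomputable def cfHomeo : (ℕ → Bool) ≃ₜ ↥cantorSet :=
  Continuous.homeoOfEquivCompactToT2 (f := cfEquiv) (cf_continuous.subtype_mk _)

end
section Part2
open Set

/-- value of a finite word: left endpoint of its interval -/
noncomputable def val : List Bool → ℝ
  | [] => 0
  | d :: t => (c2 d + val t) / 3

lemma val_nonneg (w : List Bool) : 0 ≤ val w := by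
  induction w with
  | nil => simp [val]
  | cons d t ih => have := c2_nonneg d; simp only [val]; positivity

lemma val_le (w : List Bool) : val w ≤ 1 - (1/3) ^ w.length := by
  induction w with
  | nil => simp [val]
  | cons d t ih =>
    have := c2_le d
    simp only [val, List.length_cons, pow_succ]
    linarith

lemma pow_third_pos (n : ℕ) : (0:ℝ) < (1/3) ^ n := by positivity

/-- the closed interval of a word -/
noncomputable def IInt (w : List Bool) : Set ℝ := Icc (val w) (val w + (1/3) ^ w.length)

/-- the middle-third gap of a word -/
noncomputable def GInt (w : List Bool) : Set ℝ :=
  Ioo (val w + (1/3) ^ (w.length + 1)) (val w + 2 * (1/3) ^ (w.length + 1))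

/-- the midpoint of the gap of a word -/
noncomputable def mid (w : List Bool) : ℝ := val w + (1/3) ^ w.length / 2

lemma mem_IInt_cons {x : ℝ} {d : Bool} {w : List Bool} :
    x ∈ IInt (d :: w) ↔ 3 * x - c2 d ∈ IInt w := by
  simp only [IInt, val, mem_Icc, List.length_cons, pow_succ]
  constructor <;> intro ⟨h1, h2⟩ <;> constructor <;> linarith

lemma IInt_cons_false_le {x : ℝ} {w : List Bool} (h : x ∈ IInt (false :: w)) : x ≤ 1/3 := by
  have hv := val_le w
  simp only [IInt, val, mem_Icc, List.length_cons, pow_succ, c2] at h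
  simp only [Bool.cond_false] at h
  linarith [h.2]

lemma IInt_cons_true_le {x : ℝ} {w : List Bool} (h : x ∈ IInt (true :: w)) : 2/3 ≤ x := by
  have hv := val_nonneg w
  simp only [IInt, val, mem_Icc, List.length_cons, c2] at h
  simp only [Bool.cond_true] at h
  linarith [h.1]

lemma IInt_sep : ∀ (w w' : List Bool), w.length = w'.length → w ≠ w' →
    ∀ x ∈ IInt w, ∀ y ∈ IInt w', (1/3:ℝ) ^ w.length ≤ |x - y| := by
  intro w
  induction w with
  | nil => intro w' hl hne; exact absurd (List.length_eq_zero_iff.mp hl.symm).symm hne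
  | cons d t ih =>
    intro w' hl hne x hx y hy
    match w' with
    | [] => simp at hl
    | d' :: t' =>
      simp only [List.length_cons, Nat.add_right_cancel_iff] at hl
      by_cases hd : d = d'
      · subst hd
        have ht : t ≠ t' := fun h => hne (by rw [h])
        have h1 := ih t' hl ht _ (mem_IInt_cons.mp hx) _ (mem_IInt_cons.mp hy)
        have : x - y = ((3*x - c2 d) - (3*y - c2 d)) / 3 := by ring
        rw [this, abs_div, abs_of_pos (by norm_num : (0:ℝ) < 3), List.length_cons, pow_succ]
        linarith
      · have h13 : (1/3:ℝ) ^ (d :: t).length ≤ 1/3 := by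
          rw [List.length_cons]
          calc (1/3:ℝ)^(t.length+1) ≤ (1/3)^1 := by
                apply pow_le_pow_of_le_one (by norm_num) (by norm_num); omega
            _ = 1/3 := by norm_num
        rcases Bool.eq_false_or_eq_true d with h0 | h0 <;>
          rcases Bool.eq_false_or_eq_true d' with h1 | h1
        · exact absurd (h0.trans h1.symm) hd
        · subst h0; subst h1
          have := IInt_cons_true_le hx; have := IInt_cons_false_le hy
          rw [abs_of_nonneg (by linarith)]; linarith
        · subst h0; subst h1
          have := IInt_cons_false_le hx; have := IInt_cons_true_le hy
          rw [abs_of_nonpos (by linarith)]; linarith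
        · exact absurd (h0.trans h1.symm) hd

lemma IInt_disjoint {w w' : List Bool} (hl : w.length = w'.length) (hne : w ≠ w') :
    ∀ x, x ∈ IInt w → x ∉ IInt w' := by
  intro x hx hx'
  have h := IInt_sep w w' hl hne x hx x hx'
  rw [sub_self, abs_zero] at h
  exact absurd h (not_le.mpr (pow_third_pos _))

lemma preCantorSet_eq_iUnion (n : ℕ) :
    preCantorSet n = ⋃ (w : List Bool) (_ : w.length = n), IInt w := by
  induction n with
  | zero =>
    ext x
    simp only [preCantorSet_zero, mem_iUnion, List.length_eq_zero_iff]
    constructor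
    · intro h; exact ⟨[], rfl, by simpa [IInt, val] using h⟩
    · rintro ⟨w, rfl, h⟩; simpa [IInt, val] using h
  | succ n ih =>
    ext x
    simp only [preCantorSet_succ, ih, mem_union, mem_image, mem_iUnion]
    constructor
    · rintro (⟨y, ⟨w, hw, hy⟩, rfl⟩ | ⟨y, ⟨w, hw, hy⟩, rfl⟩)
      · refine ⟨false :: w, by simp [hw], mem_IInt_cons.mpr ?_⟩
        have : 3 * (y/3) - c2 false = y := by simp [c2]; ring
        rwa [this]
      · refine ⟨true :: w, by simp [hw], mem_IInt_cons.mpr ?_⟩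
        have : 3 * ((2+y)/3) - c2 true = y := by simp [c2]; ring
        rwa [this]
    · rintro ⟨w, hw, hx⟩
      match w with
      | d :: t =>
        simp only [List.length_cons, Nat.add_right_cancel_iff] at hw
        have hy := mem_IInt_cons.mp hx
        cases d with
        | false =>
          refine Or.inl ⟨3*x - c2 false, ⟨t, hw, hy⟩, ?_⟩
          simp [c2]
        | true =>
          refine Or.inr ⟨3*x - c2 true, ⟨t, hw, hy⟩, ?_⟩
          simp [c2]

lemma IInt_subset_preCantorSet {w : List Bool} : IInt w ⊆ preCantorSet w.length := by
  rw [preCantorSet_eq_iUnion]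
  intro x hx
  exact Set.mem_iUnion₂.mpr ⟨w, rfl, hx⟩

end Part2
section Part2b
open Set

/-- prepend a finite word to an infinite sequence -/
def app (w : List Bool) (b : ℕ → Bool) : ℕ → Bool :=
  fun n => if h : n < w.length then w.get ⟨n, h⟩ else b (n - w.length)

lemma app_nil (b : ℕ → Bool) : app [] b = b := by
  funext n; simp [app]

lemma app_cons_zero (d : Bool) (w : List Bool) (b : ℕ → Bool) : app (d :: w) b 0 = d := by
  simp [app]

lemma app_cons_tail (d : Bool) (w : List Bool) (b : ℕ → Bool) :
    (fun n => app (d :: w) b (n+1)) = app w b := by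
  funext n
  simp only [app, List.length_cons]
  by_cases h : n < w.length
  · rw [dif_pos (by omega), dif_pos h]
    simp [List.get_cons_succ]
  · rw [dif_neg (by omega), dif_neg h]
    congr 1
    omega

lemma cf_app (w : List Bool) (b : ℕ → Bool) :
    cf (app w b) = val w + (1/3) ^ w.length * cf b := by
  induction w with
  | nil => simp [app_nil, val]
  | cons d t ih =>
    rw [cf_rec, app_cons_zero, app_cons_tail, ih]
    simp only [val, List.length_cons, pow_succ]
    ring

lemma val_append (w v : List Bool) : val (w ++ v) = val w + (1/3) ^ w.length * val v := by
  induction w with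
  | nil => simp [val]
  | cons d t ih =>
    simp only [List.cons_append, val, ih, List.length_cons, pow_succ, List.append_eq]
    ring

lemma cf_const_false : cf (fun _ => false) = 0 := by
  have h := cf_rec (fun _ => false)
  simp only [c2, Bool.cond_false] at h
  linarith

lemma cf_const_true : cf (fun _ => true) = 1 := by
  have h := cf_rec (fun _ => true)
  simp only [c2, Bool.cond_true] at h
  linarith

lemma gapLeft_mem_cantorSet (w : List Bool) :
    val w + (1/3) ^ (w.length + 1) ∈ cantorSet := by
  have h := cf_app (w ++ [false]) (fun _ => true)
  rw [cf_const_true, val_append] at h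
  simp only [val, List.length_append, List.length_cons, List.length_nil, c2,
    Bool.cond_false] at h
  have : cf (app (w ++ [false]) fun _ => true) = val w + (1/3) ^ (w.length + 1) := by
    rw [h]; ring
  rw [← this]
  exact cf_mem_cantorSet _

lemma gapRight_mem_cantorSet (w : List Bool) :
    val w + 2 * (1/3) ^ (w.length + 1) ∈ cantorSet := by
  have h := cf_app (w ++ [true]) (fun _ => false)
  rw [cf_const_false, val_append] at h
  simp only [val, List.length_append, List.length_cons, List.length_nil, c2,
    Bool.cond_true] at h
  have : cf (app (w ++ [true]) fun _ => false) = val w + 2 * (1/3) ^ (w.length + 1) := by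
    rw [h]; ring
  rw [← this]
  exact cf_mem_cantorSet _

lemma val_concat (w : List Bool) (d : Bool) :
    val (w ++ [d]) = val w + (1/3) ^ w.length * (c2 d / 3) := by
  rw [val_append]; simp [val]

lemma IInt_concat_subset (w : List Bool) (d : Bool) : IInt (w ++ [d]) ⊆ IInt w := by
  intro x hx
  have hc := c2_nonneg d
  have hc2 := c2_le d
  have hp := pow_third_pos w.length
  simp only [IInt, mem_Icc, val_concat, List.length_append, List.length_cons,
    List.length_nil, pow_succ] at hx ⊢
  have h1 : 0 ≤ (1/3:ℝ)^w.length * (c2 d/3) := by positivity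
  have h2 : (1/3:ℝ)^w.length * (c2 d / 3) + (1/3)^w.length * (1/3) ≤ (1/3)^w.length := by
    nlinarith
  constructor <;> [linarith [hx.1]; linarith [hx.2]]

lemma IInt_append_subset (w v : List Bool) : IInt (w ++ v) ⊆ IInt w := by
  induction v using List.reverseRecOn with
  | nil => simp
  | append_singleton v d ih =>
    rw [← List.append_assoc]
    exact (IInt_concat_subset (w ++ v) d).trans ih

lemma GInt_subset_IInt (w : List Bool) : GInt w ⊆ IInt w := by
  intro x hx
  have hp := pow_third_pos w.length
  simp only [GInt, mem_Ioo, pow_succ] at hx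
  simp only [IInt, mem_Icc]
  constructor <;> [linarith [hx.1]; linarith [hx.2]]

lemma mid_mem_GInt (w : List Bool) : mid w ∈ GInt w := by
  have hp := pow_third_pos w.length
  simp only [GInt, mid, mem_Ioo, pow_succ]
  constructor <;> linarith

lemma GInt_disjoint_preCantorSet (w : List Bool) :
    ∀ x ∈ GInt w, x ∉ preCantorSet (w.length + 1) := by
  intro x hx hmem
  rw [preCantorSet_eq_iUnion] at hmem
  obtain ⟨w', hw', hxw'⟩ := by simpa using hmem
  -- w' has length w.length + 1; write w' = t ++ [d]
  obtain ⟨t, d, rfl⟩ : ∃ t d, w' = t ++ [d] := by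
    rcases List.eq_nil_or_concat w' with rfl | ⟨t, d, h⟩
    · simp at hw'
    · exact ⟨t, d, by simpa using h⟩
  have hlt : t.length = w.length := by
    simpa using hw'
  by_cases htw : t = w
  · subst htw
    have hp := pow_third_pos t.length
    simp only [GInt, mem_Ioo] at hx
    simp only [IInt, mem_Icc, val_concat, List.length_append, List.length_cons,
      List.length_nil, pow_succ] at hxw'
    rcases Bool.eq_false_or_eq_true d with h0 | h0 <;> subst h0 <;>
      simp only [c2, Bool.cond_false, Bool.cond_true] at hxw'
    · -- right interval: x ≥ val + 2/3^(n+1) contradicts x < that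
      have := hxw'.1
      have := hx.2
      rw [pow_succ] at this
      linarith
    · have := hxw'.2
      have := hx.1
      rw [pow_succ] at this
      linarith
  · have hxt : x ∈ IInt t := IInt_append_subset t [d] hxw'
    have hxw : x ∈ IInt w := GInt_subset_IInt w hx
    exact IInt_disjoint hlt htw x hxt hxw

lemma GInt_disjoint_cantorSet (w : List Bool) : ∀ x ∈ GInt w, x ∉ cantorSet := by
  intro x hx hc
  exact GInt_disjoint_preCantorSet w x hx (Set.mem_iInter.mp hc (w.length + 1))

lemma IInt_subset_unit (w : List Bool) : IInt w ⊆ Icc (0:ℝ) 1 := by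
  intro x hx
  have h1 := val_nonneg w
  have h2 := val_le w
  simp only [IInt, mem_Icc] at hx ⊢
  constructor <;> [linarith [hx.1]; linarith [hx.2]]

lemma GInt_subset_diff (w : List Bool) : GInt w ⊆ Icc (0:ℝ) 1 \ cantorSet := by
  intro x hx
  exact ⟨IInt_subset_unit w (GInt_subset_IInt w hx), GInt_disjoint_cantorSet w x hx⟩

end Part2b
section Part2c
open Set

/-- the complement set inside [0,1] -/
noncomputable def SComp : Set ℝ := Icc (0:ℝ) 1 \ cantorSet

lemma gap_left_lt_right (w : List Bool) :
    val w + (1/3) ^ (w.length + 1) < val w + 2 * (1/3) ^ (w.length + 1) := by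
  have := pow_third_pos (w.length + 1); linarith

/-- the gap is the connected component of each of its points -/
lemma connectedComponentIn_gap {w : List Bool} {x : ℝ} (hx : x ∈ GInt w) :
    connectedComponentIn SComp x = GInt w := by
  set a := val w + (1/3) ^ (w.length + 1) with ha
  set b := val w + 2 * (1/3) ^ (w.length + 1) with hb
  apply Subset.antisymm
  · -- component is ord-connected, avoids a and b
    intro y hy
    have hpre : IsPreconnected (connectedComponentIn SComp x) :=
      isPreconnected_connectedComponentIn
    have hsub : connectedComponentIn SComp x ⊆ SComp := connectedComponentIn_subset _ _
    have hord : OrdConnected (connectedComponentIn SComp x) := hpre.ordConnected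
    have hxmem : x ∈ connectedComponentIn SComp x :=
      mem_connectedComponentIn (GInt_subset_diff w hx)
    have hanot : a ∉ SComp := fun h => h.2 (gapLeft_mem_cantorSet w)
    have hbnot : b ∉ SComp := fun h => h.2 (gapRight_mem_cantorSet w)
    simp only [GInt, mem_Ioo] at hx
    constructor
    · -- a < y
      by_contra hya
      push_neg at hya
      have : a ∈ Icc y x := ⟨hya, le_of_lt hx.1⟩
      exact hanot (hsub (hord.out hy hxmem this))
    · by_contra hyb
      push_neg at hyb
      have : b ∈ Icc x y := ⟨le_of_lt hx.2, hyb⟩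
      exact hbnot (hsub (hord.out hxmem hy this))
  · exact IsPreconnected.subset_connectedComponentIn isPreconnected_Ioo hx
      (GInt_subset_diff w)

lemma gap_midpoint_eq {w : List Bool} {x : ℝ} (hx : x ∈ GInt w) :
    (sInf (connectedComponentIn SComp x) + sSup (connectedComponentIn SComp x)) / 2 = mid w := by
  rw [connectedComponentIn_gap hx]
  rw [GInt, csInf_Ioo (gap_left_lt_right w), csSup_Ioo (gap_left_lt_right w)]
  rw [mid, pow_succ]
  ring

/-- every point of [0,1] \ C lies in some gap -/
lemma exists_gap {x : ℝ} (hx : x ∈ SComp) : ∃ w, x ∈ GInt w := by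
  have hex : ∃ n, x ∉ preCantorSet n := by
    by_contra h
    push_neg at h
    exact hx.2 (Set.mem_iInter.mpr h)
  classical
  have hN0 : Nat.find hex ≠ 0 := by
    intro h
    have h0 : x ∉ preCantorSet 0 := by rw [← h]; exact Nat.find_spec hex
    exact h0 hx.1
  obtain ⟨n, hNeq⟩ : ∃ n, Nat.find hex = n + 1 := ⟨Nat.find hex - 1, by omega⟩
  have hNs : x ∉ preCantorSet (n + 1) := by rw [← hNeq]; exact Nat.find_spec hex
  have hxn : x ∈ preCantorSet n := by
    have := Nat.find_min hex (m := n) (by omega)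
    exact not_not.mp this
  rw [preCantorSet_eq_iUnion] at hxn
  obtain ⟨w, hw, hxw⟩ := by simpa using hxn
  refine ⟨w, ?_⟩
  have h0 : x ∉ IInt (w ++ [false]) := by
    intro h
    have h2 := IInt_subset_preCantorSet (w := w ++ [false]) h
    apply hNs
    simpa [hw] using h2
  have h1 : x ∉ IInt (w ++ [true]) := by
    intro h
    have h2 := IInt_subset_preCantorSet (w := w ++ [true]) h
    apply hNs
    simpa [hw] using h2
  subst hw
  simp only [IInt, mem_Icc, val_concat, List.length_append, List.length_cons,
    List.length_nil, not_and, not_le, c2, Bool.cond_false, Bool.cond_true,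
    Nat.zero_add, pow_succ, zero_div, mul_zero, add_zero] at h0 h1
  simp only [IInt, mem_Icc] at hxw
  simp only [GInt, mem_Ioo, pow_succ]
  have hp := pow_third_pos w.length
  constructor
  · rcases lt_or_ge (val w + (1/3) ^ w.length * (1/3)) x with h | h
    · exact h
    · exfalso
      have := h0 hxw.1
      linarith
  · rcases lt_or_ge x (val w + 2 * ((1/3) ^ w.length * (1/3))) with h | h
    · exact h
    · exfalso
      have := h1 (by linarith)
      linarith [hxw.2]

lemma midSet_eq_range : midSet = Set.range mid := by
  ext z
  simp only [midSet, mem_setOf_eq, Set.mem_range]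
  constructor
  · rintro ⟨x, hx, hz⟩
    obtain ⟨w, hw⟩ := exists_gap (x := x) hx
    refine ⟨w, ?_⟩
    rw [hz]
    exact (gap_midpoint_eq hw).symm
  · rintro ⟨w, rfl⟩
    refine ⟨mid w, GInt_subset_diff w (mid_mem_GInt w), ?_⟩
    exact (gap_midpoint_eq (mid_mem_GInt w)).symm

lemma mid_mem_midSet (w : List Bool) : mid w ∈ midSet := by
  rw [midSet_eq_range]; exact ⟨w, rfl⟩

lemma GInt_eq_of_mid_mem {w w' : List Bool} (h : mid w' ∈ GInt w) : w = w' := by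
  have h1 : connectedComponentIn SComp (mid w') = GInt w := connectedComponentIn_gap h
  have h2 : connectedComponentIn SComp (mid w') = GInt w' :=
    connectedComponentIn_gap (mid_mem_GInt w')
  have hGG : GInt w = GInt w' := h1.symm.trans h2
  -- extract endpoints
  have hl : val w + (1/3) ^ (w.length + 1) = val w' + (1/3) ^ (w'.length + 1) := by
    have := congrArg sInf hGG
    rwa [GInt, GInt, csInf_Ioo (gap_left_lt_right w), csInf_Ioo (gap_left_lt_right w')] at this
  have hr : val w + 2 * (1/3) ^ (w.length + 1) = val w' + 2 * (1/3) ^ (w'.length + 1) := by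
    have := congrArg sSup hGG
    rwa [GInt, GInt, csSup_Ioo (gap_left_lt_right w), csSup_Ioo (gap_left_lt_right w')] at this
  have hlen : (1/3:ℝ) ^ (w.length + 1) = (1/3) ^ (w'.length + 1) := by linarith
  have hlen' : w.length = w'.length := by
    by_contra hne
    rcases Nat.lt_or_ge w.length w'.length with h | h
    · have := pow_lt_pow_right_of_lt_one₀ (by norm_num : (0:ℝ) < 1/3)
        (by norm_num : (1:ℝ)/3 < 1) (by omega : w.length + 1 < w'.length + 1)
      linarith
    · have h' : w'.length < w.length := by omega
      have := pow_lt_pow_right_of_lt_one₀ (by norm_num : (0:ℝ) < 1/3)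
        (by norm_num : (1:ℝ)/3 < 1) (by omega : w'.length + 1 < w.length + 1)
      linarith
  have hval : val w = val w' := by
    rw [hlen'] at hl
    linarith
  by_contra hne
  have := IInt_sep w w' hlen' hne (val w) ⟨le_refl _, by linarith [pow_third_pos w.length]⟩
    (val w') ⟨le_refl _, by linarith [pow_third_pos w'.length]⟩
  rw [hval, sub_self, abs_zero] at this
  exact absurd this (not_le.mpr (pow_third_pos _))

lemma mid_injective : Function.Injective mid := by
  intro w w' h
  apply GInt_eq_of_mid_mem
  rw [← h]
  exact mid_mem_GInt w

lemma GInt_inter_cTilde {w : List Bool} {x : ℝ} (hx : x ∈ GInt w) (hx' : x ∈ cTilde) :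
    x = mid w := by
  rcases hx' with hc | hm
  · exact absurd hc (GInt_disjoint_cantorSet w x hx)
  · rw [midSet_eq_range] at hm
    obtain ⟨w', rfl⟩ := hm
    rw [GInt_eq_of_mid_mem hx]

end Part2c
section Part2d
open Set

lemma preCantorSet_antitone' {m n : ℕ} (h : m ≤ n) : preCantorSet n ⊆ preCantorSet m := by
  induction n with
  | zero => simp_all
  | succ n ih =>
    rcases Nat.lt_or_ge m (n+1) with h' | h'
    · exact (preCantorSet_antitone_succ n).trans (ih (by omega))
    · have : m = n + 1 := by omega
      subst this
      exact subset_rfl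

lemma cTilde_subset_unit : cTilde ⊆ Icc (0:ℝ) 1 := by
  rintro x (hc | hm)
  · exact cantorSet_subset_unitInterval hc
  · rw [midSet_eq_range] at hm
    obtain ⟨w, rfl⟩ := hm
    exact IInt_subset_unit w (GInt_subset_IInt w (mid_mem_GInt w))

lemma cantorSet_subset_cTilde : cantorSet ⊆ cTilde := subset_union_left

lemma isClosed_cTilde : IsClosed cTilde := by
  rw [← isOpen_compl_iff, isOpen_iff_mem_nhds]
  intro y hy
  by_cases hyu : y ∈ Icc (0:ℝ) 1
  · have hyc : y ∉ cantorSet := fun h => hy (Or.inl h)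
    obtain ⟨w, hw⟩ := exists_gap (x := y) ⟨hyu, hyc⟩
    have hym : y ≠ mid w := fun h => hy (Or.inr (h ▸ mid_mem_midSet w))
    have hopen : IsOpen (GInt w \ {mid w}) := IsOpen.sdiff isOpen_Ioo isClosed_singleton
    rw [mem_nhds_iff]
    refine ⟨GInt w \ {mid w}, ?_, hopen, ⟨hw, by simpa using hym⟩⟩
    rintro z ⟨hz1, hz2⟩ hz3
    exact hz2 (by simpa using GInt_inter_cTilde hz1 hz3)
  · rw [mem_nhds_iff]
    refine ⟨(Icc (0:ℝ) 1)ᶜ, ?_, isClosed_Icc.isOpen_compl, hyu⟩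
    intro z hz hz'
    exact hz (cTilde_subset_unit hz')

lemma isCompact_cTilde : IsCompact cTilde :=
  isCompact_Icc.of_isClosed_subset isClosed_cTilde cTilde_subset_unit

instance : CompactSpace ↥cTilde := isCompact_iff_compactSpace.mp isCompact_cTilde
instance : CompactSpace ↥cantorSet := isCompact_iff_compactSpace.mp isCompact_cantorSet

/-- prefix word of a sequence -/
def pword (b : ℕ → Bool) (n : ℕ) : List Bool := List.ofFn (fun i : Fin n => b i)

lemma pword_length (b : ℕ → Bool) (n : ℕ) : (pword b n).length = n := by
  simp [pword]

lemma app_pword (b : ℕ → Bool) (n : ℕ) :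
    app (pword b n) (fun k => b (k + n)) = b := by
  funext m
  simp only [app, pword, pword_length, List.length_ofFn]
  by_cases h : m < n
  · rw [dif_pos h]
    simp [List.get_ofFn]
  · rw [dif_neg h]
    congr 1
    omega

lemma cf_mem_IInt_pword (b : ℕ → Bool) (n : ℕ) : cf b ∈ IInt (pword b n) := by
  have key := cf_app (pword b n) (fun k => b (k + n))
  rw [app_pword, pword_length] at key
  rw [key]
  have h0 := cf_nonneg (fun k => b (k + n))
  have h1 := cf_le_one (fun k => b (k + n))
  have hp := pow_third_pos n
  simp only [IInt, mem_Icc, pword_length]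
  constructor <;> nlinarith

lemma cantor_prefix_of_mem_IInt {x : ℝ} {w : List Bool} (hx : x ∈ cantorSet)
    (hxw : x ∈ IInt w) : pword (dig x) w.length = w := by
  have h1 : x ∈ IInt (pword (dig x) w.length) := by
    have := cf_mem_IInt_pword (dig x) w.length
    rwa [cf_dig hx] at this
  by_contra hne
  exact IInt_disjoint (pword_length _ _) hne x h1 hxw

lemma mid_mem_IInt_cases {w w' : List Bool} (h : mid w' ∈ IInt w) :
    w.length ≤ w'.length ∧ List.take w.length w' = w := by
  have hlen : w.length ≤ w'.length := by
    by_contra hlt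
    push_neg at hlt
    have hsub : IInt w ⊆ preCantorSet (w'.length + 1) :=
      (IInt_subset_preCantorSet).trans (preCantorSet_antitone' (by omega))
    exact GInt_disjoint_preCantorSet w' (mid w') (mid_mem_GInt w') (hsub h)
  have hdec : w' = List.take w.length w' ++ List.drop w.length w' := (List.take_append_drop _ _).symm
  have hmem : mid w' ∈ IInt (List.take w.length w') := by
    have := IInt_append_subset (List.take w.length w') (List.drop w.length w')
    rw [← hdec] at this
    exact this (GInt_subset_IInt w' (mid_mem_GInt w'))
  have hlt : (List.take w.length w').length = w.length := by
    simp [List.length_take]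
    omega
  constructor
  · exact hlen
  · by_contra hne
    exact IInt_disjoint hlt hne _ hmem h

/-- quantitative separation: cTilde points outside `IInt w` are far from `IInt w` -/
lemma cTilde_far_of_not_mem {w : List Bool} {x : ℝ} (hx : x ∈ cTilde) (hxw : x ∉ IInt w) :
    ∀ y ∈ IInt w, (1/3) ^ w.length / 2 ≤ |x - y| := by
  intro y hy
  rcases hx with hc | hm
  · -- x is a Cantor point, lies in its own interval of the same level
    have h1 : x ∈ IInt (pword (dig x) w.length) := by
      have := cf_mem_IInt_pword (dig x) w.length
      rwa [cf_dig hc] at this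
    have hne : pword (dig x) w.length ≠ w := fun h => hxw (h ▸ h1)
    have := IInt_sep _ w (by rw [pword_length]) hne x h1 y hy
    rw [pword_length] at this
    linarith [pow_third_pos w.length]
  · rw [midSet_eq_range] at hm
    obtain ⟨w', rfl⟩ := hm
    rcases Nat.lt_or_ge w'.length w.length with hlt | hge
    · -- the gap of w' is at a shallower level; y avoids the whole gap
      have hyP : y ∈ preCantorSet (w'.length + 1) :=
        (IInt_subset_preCantorSet.trans (preCantorSet_antitone' (by omega))) hy
      have hyG : y ∉ GInt w' := fun h => GInt_disjoint_preCantorSet w' y h hyP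
      simp only [GInt, mem_Ioo, not_and_or, not_lt] at hyG
      have hpow : (1/3:ℝ) ^ w.length ≤ (1/3) ^ (w'.length + 1) := by
        apply pow_le_pow_of_le_one (by norm_num) (by norm_num)
        omega
      have hmid : mid w' = val w' + (1/3) ^ (w'.length + 1) * (3/2) := by
        rw [mid, pow_succ]; ring
      rcases hyG with h | h
      · rw [abs_of_nonneg (by rw [hmid]; linarith [pow_third_pos (w'.length + 1)])]
        rw [hmid]
        linarith [pow_third_pos (w'.length + 1)]
      · rw [abs_of_nonpos (by rw [hmid]; linarith [pow_third_pos (w'.length + 1)])]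
        rw [hmid]
        linarith [pow_third_pos (w'.length + 1)]
    · -- deep gap: its containing level-|w| interval is different from w
      have hdec : w' = List.take w.length w' ++ List.drop w.length w' :=
        (List.take_append_drop _ _).symm
      have hmem : mid w' ∈ IInt (List.take w.length w') := by
        have := IInt_append_subset (List.take w.length w') (List.drop w.length w')
        rw [← hdec] at this
        exact this (GInt_subset_IInt w' (mid_mem_GInt w'))
      have hlt : (List.take w.length w').length = w.length := by
        simp [List.length_take]; omega
      have hne : List.take w.length w' ≠ w := fun h => hxw (h ▸ hmem)
      have := IInt_sep _ w hlt hne _ hmem y hy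
      rw [hlt] at this
      linarith [pow_third_pos w.length]

/-- classification of cTilde points inside an interval -/
lemma cTilde_mem_IInt_classify {w : List Bool} {x : ℝ} (hx : x ∈ cTilde) (hxw : x ∈ IInt w) :
    (x ∈ cantorSet ∧ pword (dig x) w.length = w) ∨
    (∃ w', x = mid w' ∧ w.length ≤ w'.length ∧ List.take w.length w' = w) := by
  rcases hx with hc | hm
  · exact Or.inl ⟨hc, cantor_prefix_of_mem_IInt hc hxw⟩
  · rw [midSet_eq_range] at hm
    obtain ⟨w', rfl⟩ := hm
    obtain ⟨h1, h2⟩ := mid_mem_IInt_cases hxw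
    exact Or.inr ⟨w', rfl, h1, h2⟩

end Part2d
/-- The equivalence relation on `E × C̃` collapsing each slice `E × {x}`, `x ∈ C`,
to a point. -/
def upsilonSetoid (E : Type*) : Setoid (E × ↥cTilde) where
  r p q := p = q ∨ ((p.2 : ℝ) = (q.2 : ℝ) ∧ (p.2 : ℝ) ∈ cantorSet)
  iseqv := by
    constructor
    · intro p
      exact Or.inl rfl
    · rintro p q (rfl | ⟨h, hm⟩)
      · exact Or.inl rfl
      · exact Or.inr ⟨h.symm, h ▸ hm⟩
    · rintro p q r (rfl | ⟨h, hm⟩) (rfl | ⟨h', hm'⟩)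
      · exact Or.inl rfl
      · exact Or.inr ⟨h', hm'⟩
      · exact Or.inr ⟨h, hm⟩
      · exact Or.inr ⟨h.trans h', hm⟩

/-- The Cantor compactification `Υ^C(E) = (Eω)^C`: the quotient of `E × C̃` collapsing each
slice `E × {x}`, `x ∈ C`, to a point, with the quotient topology. -/
def UpsilonC (E : Type*) [TopologicalSpace E] : Type _ :=
  Quotient (upsilonSetoid E)

instance (E : Type*) [TopologicalSpace E] : TopologicalSpace (UpsilonC E) :=
  instTopologicalSpaceQuotient

section Part3
open Set
open scoped Classical

lemma mem_midSet_of {x : ℝ} (h1 : x ∈ cTilde) (h2 : x ∉ cantorSet) : x ∈ midSet :=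
  h1.resolve_left h2

lemma mid_not_mem_cantorSet (w : List Bool) : mid w ∉ cantorSet :=
  GInt_disjoint_cantorSet w (mid w) (mid_mem_GInt w)

noncomputable def wordOf (x : ℝ) (h : x ∈ midSet) : List Bool :=
  (show ∃ w, mid w = x by rwa [midSet_eq_range, Set.mem_range] at h).choose

lemma mid_wordOf (x : ℝ) (h : x ∈ midSet) : mid (wordOf x h) = x :=
  (show ∃ w, mid w = x by rwa [midSet_eq_range, Set.mem_range] at h).choose_spec

lemma wordOf_mid (w : List Bool) (h : mid w ∈ midSet) : wordOf (mid w) h = w :=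
  mid_injective (by rw [mid_wordOf])

/-- encoding of a Cantor point: digits at even positions -/
def encInf (b : ℕ → Bool) : ℕ → Bool := fun p => if p % 2 = 0 then b (p / 2) else false

/-- encoding of a (gap word, Cantor point) pair -/
def encFin (w : List Bool) (e : ℕ → Bool) : ℕ → Bool := fun p =>
  if h : p < 2 * w.length then (if p % 2 = 0 then w.get ⟨p / 2, by omega⟩ else false)
  else if p = 2 * w.length then e 0
  else if p = 2 * w.length + 1 then true
  else e (p - 2 * w.length - 1)

lemma encInf_odd (b : ℕ → Bool) (k : ℕ) : encInf b (2 * k + 1) = false := by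
  simp only [encInf]
  rw [if_neg (by omega)]

lemma encInf_even (b : ℕ → Bool) (k : ℕ) : encInf b (2 * k) = b k := by
  simp only [encInf]
  rw [if_pos (by omega), show 2 * k / 2 = k from by omega]

lemma encFin_odd_marker' (w : List Bool) (e : ℕ → Bool) (k : ℕ) (hk : k = w.length) :
    encFin w e (2 * k + 1) = true := by
  subst hk
  simp only [encFin]
  rw [dif_neg (by omega), if_neg (by omega)]
  simp

lemma encFin_odd_marker (w : List Bool) (e : ℕ → Bool) :
    encFin w e (2 * w.length + 1) = true := encFin_odd_marker' w e _ rfl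

lemma encFin_small_even (w : List Bool) (e : ℕ → Bool) (k : ℕ) (h : k < w.length) :
    encFin w e (2 * k) = w.get ⟨k, h⟩ := by
  simp only [encFin]
  rw [dif_pos (by omega), if_pos (by omega)]
  congr 1
  simp only [Fin.mk.injEq]
  omega

lemma encFin_small_odd (w : List Bool) (e : ℕ → Bool) (k : ℕ) (h : k < w.length) :
    encFin w e (2 * k + 1) = false := by
  simp only [encFin]
  rw [dif_pos (by omega), if_neg (by omega)]

lemma encFin_at_2n' (w : List Bool) (e : ℕ → Bool) (k : ℕ) (hk : k = w.length) :
    encFin w e (2 * k) = e 0 := by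
  subst hk
  simp only [encFin]
  rw [dif_neg (by omega)]
  simp

lemma encFin_at_2n (w : List Bool) (e : ℕ → Bool) : encFin w e (2 * w.length) = e 0 :=
  encFin_at_2n' w e _ rfl

lemma encFin_late' (w : List Bool) (e : ℕ → Bool) (p k : ℕ)
    (hp : p = 2 * w.length + 2 + k) : encFin w e p = e (k + 1) := by
  subst hp
  simp only [encFin]
  rw [dif_neg (by omega), if_neg (by omega), if_neg (by omega)]
  congr 1
  omega

lemma encFin_late (w : List Bool) (e : ℕ → Bool) (k : ℕ) :
    encFin w e (2 * w.length + 2 + k) = e (k + 1) := encFin_late' w e _ k rfl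

lemma encInf_ne_encFin (b : ℕ → Bool) (w : List Bool) (e : ℕ → Bool) :
    encInf b ≠ encFin w e := by
  intro h
  have h1 := congrFun h (2 * w.length + 1)
  rw [encInf_odd, encFin_odd_marker] at h1
  simp at h1

lemma encInf_injective : Function.Injective encInf := by
  intro b b' h
  funext k
  have := congrFun h (2 * k)
  rwa [encInf_even, encInf_even] at this

lemma encFin_inj {w w' : List Bool} {e e' : ℕ → Bool} (h : encFin w e = encFin w' e') :
    w = w' ∧ e = e' := by
  have hlen : w.length = w'.length := by
    by_contra hne
    rcases Nat.lt_or_ge w.length w'.length with hlt | hge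
    · have h1 := congrFun h (2 * w.length + 1)
      rw [encFin_odd_marker, encFin_small_odd w' e' w.length hlt] at h1
      simp at h1
    · have hlt : w'.length < w.length := by omega
      have h1 := congrFun h (2 * w'.length + 1)
      rw [encFin_odd_marker, encFin_small_odd w e w'.length hlt] at h1
      simp at h1
  constructor
  · apply List.ext_get hlen
    intro i h1 h2
    have := congrFun h (2 * i)
    rwa [encFin_small_even w e i h1, encFin_small_even w' e' i h2] at this
  · funext j
    match j with
    | 0 =>
      have := congrFun h (2 * w.length)
      rwa [encFin_at_2n, hlen, encFin_at_2n] at this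
    | k + 1 =>
      have := congrFun h (2 * w.length + 2 + k)
      rwa [encFin_late, hlen, encFin_late] at this

/-- the big map -/
noncomputable def H (p : ↥cantorSet × ↥cTilde) : ℕ → Bool :=
  if h : (p.2 : ℝ) ∈ cantorSet then encInf (dig (p.2 : ℝ))
  else encFin (wordOf (p.2 : ℝ) (mem_midSet_of p.2.2 h)) (dig (p.1 : ℝ))

lemma H_cantor (p : ↥cantorSet × ↥cTilde) (h : (p.2 : ℝ) ∈ cantorSet) :
    H p = encInf (dig (p.2 : ℝ)) := dif_pos h

lemma H_mid (p : ↥cantorSet × ↥cTilde) (h : (p.2 : ℝ) ∉ cantorSet) :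
    H p = encFin (wordOf (p.2 : ℝ) (mem_midSet_of p.2.2 h)) (dig (p.1 : ℝ)) := dif_neg h

lemma H_respects : ∀ p q, (upsilonSetoid ↥cantorSet).r p q → H p = H q := by
  rintro p q (rfl | ⟨hval, hmem⟩)
  · rfl
  · rw [H_cantor p hmem, H_cantor q (hval ▸ hmem), hval]

lemma H_inj : ∀ p q, H p = H q → (upsilonSetoid ↥cantorSet).r p q := by
  intro p q h
  by_cases hp : (p.2 : ℝ) ∈ cantorSet <;> by_cases hq : (q.2 : ℝ) ∈ cantorSet
  · rw [H_cantor p hp, H_cantor q hq] at h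
    have hd := encInf_injective h
    have : (p.2 : ℝ) = (q.2 : ℝ) := by
      rw [← cf_dig hp, ← cf_dig hq, hd]
    exact Or.inr ⟨this, hp⟩
  · rw [H_cantor p hp, H_mid q hq] at h
    exact absurd h (encInf_ne_encFin _ _ _)
  · rw [H_mid p hp, H_cantor q hq] at h
    exact absurd h.symm (encInf_ne_encFin _ _ _)
  · rw [H_mid p hp, H_mid q hq] at h
    obtain ⟨hw, he⟩ := encFin_inj h
    left
    have h2 : (p.2 : ℝ) = (q.2 : ℝ) := by
      rw [← mid_wordOf _ (mem_midSet_of p.2.2 hp), ← mid_wordOf _ (mem_midSet_of q.2.2 hq), hw]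
    have h1 : (p.1 : ℝ) = (q.1 : ℝ) := by
      rw [← cf_dig p.1.2, ← cf_dig q.1.2, he]
    exact Prod.ext (Subtype.ext h1) (Subtype.ext h2)

lemma H_surj : Function.Surjective H := by
  intro u
  classical
  by_cases hodd : ∃ k, u (2 * k + 1) = true
  · -- midpoint case
    obtain ⟨k, hspec, hmin⟩ : ∃ k, u (2 * k + 1) = true ∧ ∀ j < k, u (2 * j + 1) = false :=
      ⟨Nat.find hodd, Nat.find_spec hodd, fun j hj => by simpa using Nat.find_min hodd hj⟩
    set w : List Bool := List.ofFn (fun i : Fin k => u (2 * i)) with hw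
    have hwlen : w.length = k := by simp [hw]
    set e : ℕ → Bool := fun j => if j = 0 then u (2 * k) else u (2 * k + 1 + j) with he
    have he0 : e 0 = u (2 * k) := by simp [he]
    have heS : ∀ j, e (j + 1) = u (2 * k + 2 + j) := by
      intro j
      simp only [he]
      rw [if_neg (by omega)]
      congr 1
      omega
    refine ⟨(⟨⟨cf e, cf_mem_cantorSet e⟩, ⟨mid w, Or.inr (mid_mem_midSet w)⟩⟩ :
      ↥cantorSet × ↥cTilde), ?_⟩
    rw [H_mid _ (by exact mid_not_mem_cantorSet w)]
    simp only
    rw [wordOf_mid w, dig_cf]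
    funext p
    rcases Nat.even_or_odd p with ⟨j, hj⟩ | ⟨j, hj⟩
    · -- p = 2 j
      subst hj
      rw [show j + j = 2 * j by ring]
      rcases Nat.lt_or_ge j k with hjk | hjk
      · rw [encFin_small_even w e j (by omega)]
        simp [hw, List.get_ofFn]
      · rcases Nat.eq_or_lt_of_le hjk with heq | hlt
        · subst heq
          rw [encFin_at_2n' w e k (by omega), he0]
        · rw [encFin_late' w e (2 * j) (2 * j - 2 * k - 2) (by omega), heS]
          congr 1
          omega
    · subst hj
      rcases Nat.lt_or_ge j k with hjk | hjk
      · rw [encFin_small_odd w e j (by omega)]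
        exact (hmin j hjk).symm
      · rcases Nat.eq_or_lt_of_le hjk with heq | hlt
        · subst heq
          rw [encFin_odd_marker' w e k (by omega)]
          exact hspec.symm
        · rw [encFin_late' w e (2 * j + 1) (2 * j - 2 * k - 1) (by omega), heS]
          congr 1
          omega
  · -- Cantor case
    push_neg at hodd
    set b : ℕ → Bool := fun k => u (2 * k) with hb
    refine ⟨(⟨⟨cf b, cf_mem_cantorSet b⟩,
      ⟨cf b, Or.inl (cf_mem_cantorSet b)⟩⟩ : ↥cantorSet × ↥cTilde), ?_⟩
    rw [H_cantor _ (by exact cf_mem_cantorSet b)]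
    simp only
    rw [dig_cf]
    funext p
    rcases Nat.even_or_odd p with ⟨j, hj⟩ | ⟨j, hj⟩
    · subst hj
      rw [show j + j = 2 * j by ring, encInf_even]
    · subst hj
      rw [encInf_odd]
      have := hodd j
      revert this
      cases u (2 * j + 1) <;> simp

end Part3
section Part4
open Set Filter

lemma pword_getD (b : ℕ → Bool) (n i : ℕ) (h : i < n) :
    (pword b n).getD i false = b i := by
  rw [List.getD_eq_getElem _ _ (by rw [pword_length]; omega)]
  simp [pword]

lemma eq_of_pword_eq {b b' : ℕ → Bool} {n : ℕ} (h : pword b n = pword b' n)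
    {i : ℕ} (hi : i < n) : b i = b' i := by
  have h2 : (pword b n).getD i false = (pword b' n).getD i false := by rw [h]
  rwa [pword_getD b n i hi, pword_getD b' n i hi] at h2

lemma wordOf_eq_of_val {x : ℝ} {h : x ∈ midSet} {w' : List Bool} (hx : x = mid w') :
    wordOf x h = w' := by
  subst hx
  exact wordOf_mid w' h

lemma digc_continuous : Continuous (fun c : ↥cantorSet => dig (c : ℝ)) := by
  have heq : (fun c : ↥cantorSet => dig (c : ℝ)) = cfHomeo.symm := by
    funext c
    apply cf_injective
    rw [cf_dig c.2]
    have h1 := cfHomeo.apply_symm_apply c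
    calc (c : ℝ) = ((cfHomeo (cfHomeo.symm c)) : ℝ) := by rw [h1]
      _ = cf (cfHomeo.symm c) := rfl
  rw [heq]
  exact cfHomeo.symm.continuous

lemma encFin_continuous (w : List Bool) : Continuous (encFin w) := by
  apply continuous_pi
  intro p
  rcases Nat.lt_or_ge p (2 * w.length) with h1 | h1
  · by_cases h2 : p % 2 = 0
    · have : (fun e => encFin w e p) = fun _ => w.get ⟨p / 2, by omega⟩ := by
        funext e
        simp only [encFin]
        rw [dif_pos h1, if_pos h2]
      rw [this]; exact continuous_const
    · have : (fun e => encFin w e p) = fun _ => false := by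
        funext e
        simp only [encFin]
        rw [dif_pos h1, if_neg h2]
      rw [this]; exact continuous_const
  · rcases Nat.lt_trichotomy p (2 * w.length + 1) with h2 | h2 | h2
    · have hp : p = 2 * w.length := by omega
      subst hp
      have : (fun e : ℕ → Bool => encFin w e (2 * w.length)) = fun e => e 0 := by
        funext e; exact encFin_at_2n w e
      rw [this]; exact continuous_apply 0
    · subst h2
      have : (fun e : ℕ → Bool => encFin w e (2 * w.length + 1)) = fun _ => true := by
        funext e; exact encFin_odd_marker w e
      rw [this]; exact continuous_const
    · have : (fun e : ℕ → Bool => encFin w e p) = fun e => e (p - 2 * w.length - 1) := by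
        funext e
        rw [encFin_late' w e p (p - 2 * w.length - 2) (by omega)]
        congr 1
        omega
      rw [this]; exact continuous_apply _

lemma H_continuous : Continuous H := by
  rw [continuous_iff_continuousAt]
  rintro ⟨e, x⟩
  by_cases hx : (x : ℝ) ∈ cantorSet
  · -- Cantor point: each coordinate of H is locally constant
    apply continuousAt_pi.mpr
    intro p
    set n := p + 1 with hn
    set w := pword (dig (x : ℝ)) n with hwdef
    have hwlen : w.length = n := pword_length _ _
    have hxI : (x : ℝ) ∈ IInt w := by
      have := cf_mem_IInt_pword (dig (x : ℝ)) n
      rwa [cf_dig hx] at this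
    apply Filter.EventuallyEq.continuousAt (y := encInf (dig (x : ℝ)) p)
    have hUopen : IsOpen {q : ↥cantorSet × ↥cTilde | |(q.2 : ℝ) - (x : ℝ)| < (1/3) ^ n / 2} := by
      have hc : Continuous (fun q : ↥cantorSet × ↥cTilde => |(q.2 : ℝ) - (x : ℝ)|) :=
        ((continuous_subtype_val.comp continuous_snd).sub continuous_const).abs
      exact hc.isOpen_preimage (Iio ((1/3) ^ n / 2)) isOpen_Iio
    have hUmem : (⟨e, x⟩ : ↥cantorSet × ↥cTilde) ∈
        {q : ↥cantorSet × ↥cTilde | |(q.2 : ℝ) - (x : ℝ)| < (1/3) ^ n / 2} := by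
      show |(x:ℝ) - (x:ℝ)| < (1/3) ^ n / 2
      rw [sub_self, abs_zero]
      positivity
    filter_upwards [hUopen.mem_nhds hUmem] with q hq'
    have hq : |(q.2 : ℝ) - (x : ℝ)| < (1/3) ^ n / 2 := hq'
    -- q.2 must be in IInt w
    have hqI : (q.2 : ℝ) ∈ IInt w := by
      by_contra hqI
      have := cTilde_far_of_not_mem q.2.2 hqI (x : ℝ) hxI
      rw [hwlen] at this
      linarith
    rcases cTilde_mem_IInt_classify q.2.2 hqI with ⟨hc, hpw⟩ | ⟨w', hval, hle, htake⟩
    · rw [H_cantor q hc]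
      rw [hwlen] at hpw
      simp only [encInf]
      by_cases h2 : p % 2 = 0
      · rw [if_pos h2, if_pos h2]
        exact eq_of_pword_eq (hpw.trans hwdef) (show p / 2 < n by omega)
      · rw [if_neg h2, if_neg h2]
    · rw [hwlen] at hle htake
      have hqnc : (q.2 : ℝ) ∉ cantorSet := by
        rw [hval]; exact mid_not_mem_cantorSet w'
      rw [H_mid q hqnc, wordOf_eq_of_val hval]
      rcases Nat.even_or_odd p with ⟨j, hj⟩ | ⟨j, hj⟩
      · have hp2 : p = 2 * j := by omega
        subst hp2
        have hjn : j < n := by omega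
        rw [encFin_small_even w' (dig (q.1 : ℝ)) j (by omega), encInf_even]
        -- w'.get j = (take n w').get j = w.get j = dig x j
        have h1 : w'.get ⟨j, by omega⟩ = (List.take n w').getD j false := by
          rw [List.getD_eq_getElem _ _ (by rw [List.length_take]; omega)]
          rw [List.getElem_take]
          rfl
        rw [h1, htake, hwdef, pword_getD _ _ _ hjn]
      · have hp2 : p = 2 * j + 1 := by omega
        subst hp2
        rw [encFin_small_odd w' (dig (q.1 : ℝ)) j (by omega), encInf_odd]
  · -- midpoint: H is locally encFin w₀ ∘ dig ∘ fst
    have hxm : (x : ℝ) ∈ midSet := mem_midSet_of x.2 hx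
    set w₀ := wordOf (x : ℝ) hxm with hw₀
    have hxval : (x : ℝ) = mid w₀ := (mid_wordOf _ hxm).symm
    have hg : Continuous (fun q : ↥cantorSet × ↥cTilde => encFin w₀ (dig (q.1 : ℝ))) :=
      (encFin_continuous w₀).comp (digc_continuous.comp continuous_fst)
    apply ContinuousAt.congr (hg.continuousAt)
    have hUopen : IsOpen {q : ↥cantorSet × ↥cTilde | (q.2 : ℝ) ∈ GInt w₀} :=
      (isOpen_Ioo).preimage (continuous_subtype_val.comp continuous_snd)
    have hUmem : (⟨e, x⟩ : ↥cantorSet × ↥cTilde) ∈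
        {q : ↥cantorSet × ↥cTilde | (q.2 : ℝ) ∈ GInt w₀} := by
      show (x:ℝ) ∈ GInt w₀
      rw [hxval]
      exact mid_mem_GInt w₀
    filter_upwards [hUopen.mem_nhds hUmem] with q hq'
    have hq : (q.2 : ℝ) ∈ GInt w₀ := hq'
    have hqval : (q.2 : ℝ) = mid w₀ := GInt_inter_cTilde hq q.2.2
    have hqnc : (q.2 : ℝ) ∉ cantorSet := by
      rw [hqval]; exact mid_not_mem_cantorSet w₀
    rw [H_mid q hqnc, wordOf_eq_of_val hqval]

end Part4
section Part5

noncomputable def Phi : UpsilonC ↥cantorSet → (ℕ → Bool) :=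
  Quotient.lift H H_respects

lemma Phi_continuous : Continuous Phi := H_continuous.quotient_lift _

lemma Phi_bijective : Function.Bijective Phi := by
  constructor
  · intro a b
    refine Quotient.inductionOn₂ a b ?_
    intro p q h
    exact Quotient.sound (H_inj p q h)
  · intro u
    obtain ⟨p, hp⟩ := H_surj u
    exact ⟨Quotient.mk _ p, hp⟩

instance : CompactSpace (UpsilonC ↥cantorSet) := Quotient.compactSpace

noncomputable def PhiEquiv : UpsilonC ↥cantorSet ≃ (ℕ → Bool) :=
  Equiv.ofBijective Phi Phi_bijective

noncomputable def upsilonHomeoCantorSpace : UpsilonC ↥cantorSet ≃ₜ (ℕ → Bool) :=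
  Continuous.homeoOfEquivCompactToT2 (f := PhiEquiv) Phi_continuous

noncomputable def upsilonHomeoCantorSet : UpsilonC ↥cantorSet ≃ₜ ↥cantorSet :=
  upsilonHomeoCantorSpace.trans cfHomeo

end Part5

/-- **Self-similarity of the Cantor compactification:** `Υ^C(C)` is homeomorphic to the
Cantor set `C` (equivalently, to the Cantor space `ℕ → Bool`). -/
theorem stmt15 :
    Nonempty (UpsilonC ↥cantorSet ≃ₜ ↥cantorSet) ∧
    Nonempty (UpsilonC ↥cantorSet ≃ₜ (ℕ → Bool)) := by
  exact ⟨⟨upsilonHomeoCantorSet⟩, ⟨upsilonHomeoCantorSpace⟩⟩
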